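/- arXiv:2206.06715 — 4 statements merged into one kernel-verified Lean document; each statement's English description precedes it below -/
import Mathlib

section
/- Let S ⊆ ℝⁿ be a nonempty closed set, q ∉ S, and p' ∈ S a nearest point to q. If the unsigned distance function d(x) = infDist x S is differentiable at q, then its gradient at q equals the unit vector pointing from p' to q: ∇d(q) = (q - p')/‖q - p'‖. -/
/-!
Moving from `q` towards its nearest point `p'` decreases `d` at unit speed, so the one-sided
directional derivative of `d` at `q` in the unit direction `u = (q - p') / ‖q - p'‖` is `1`.
Since `d` is 1-Lipschitz, `‖∇d(q)‖ ≤ 1`, and `⟪∇d(q), u⟫ = 1` is then the equality case of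
Cauchy–Schwarz, forcing `∇d(q) = u`.
-/

open Metric InnerProductSpace Set Filter Topology

theorem infDist_add_smul_sub_of_norm_sub_eq_infDist {E : Type*} [SeminormedAddCommGroup E]
    [NormedSpace ℝ E] {s : Set E} {p q : E} (hp : p ∈ s)
    (hnear : ‖q - p‖ = infDist q s) {t : ℝ} (ht : t ∈ Icc (-1 : ℝ) 0) :
    infDist (q + t • (q - p)) s = infDist q s + t * ‖q - p‖ := by
  apply le_antisymm
  · calc infDist (q + t • (q - p)) s ≤ dist (q + t • (q - p)) p := infDist_le_dist_of_mem hp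
      _ = ‖(1 + t) • (q - p)‖ := by rw [dist_eq_norm]; congr 1; module
      _ = infDist q s + t * ‖q - p‖ := by
        rw [norm_smul, Real.norm_of_nonneg (by linarith [ht.1]), ← hnear]; ring
  · have hdist : dist q (q + t • (q - p)) = -t * ‖q - p‖ := by
      rw [dist_comm, dist_eq_norm, add_sub_cancel_left, norm_smul,
        Real.norm_of_nonpos ht.2]
    linarith [infDist_le_infDist_add_dist (x := q) (y := q + t • (q - p)) (s := s)]

theorem HasFDerivAt.apply_eq_of_eventuallyEq_left {E F : Type*} [NormedAddCommGroup E]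
    [NormedSpace ℝ E] [NormedAddCommGroup F] [NormedSpace ℝ F] {f : E → F} {f' : E →L[ℝ] F}
    {x v : E} {c : F} (hf : HasFDerivAt f f' x)
    (hline : ∀ᶠ t in 𝓝[≤] (0 : ℝ), f (x + t • v) = f x + t • c) : f' v = c := by
  have hcomp : HasDerivAt (fun t : ℝ => f (x + t • v)) (f' v) 0 := by
    have hl : HasDerivAt (fun t : ℝ => x + t • v) v 0 := by
      simpa using ((hasDerivAt_id (0 : ℝ)).smul_const v).const_add x
    exact (by simpa using hf : HasFDerivAt f f' (x + (0 : ℝ) • v)).comp_hasDerivAt 0 hl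
  have haff : HasDerivWithinAt (fun t : ℝ => f (x + t • v)) c (Iic 0) 0 := by
    have : HasDerivAt (fun t : ℝ => f x + t • c) c 0 := by
      simpa using ((hasDerivAt_id (0 : ℝ)).smul_const c).const_add (f x)
    exact this.hasDerivWithinAt.congr_of_eventuallyEq hline (by simp)
  exact (uniqueDiffOn_Iic 0 0 self_mem_Iic).eq_deriv _ hcomp.hasDerivWithinAt haff

theorem eq_inv_norm_smul_of_norm_le_one_of_inner_eq_norm {F : Type*} [NormedAddCommGroup F]
    [InnerProductSpace ℝ F] {g v : F} (hv : v ≠ 0) (hg : ‖g‖ ≤ 1)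
    (hgv : inner ℝ g v = ‖v‖) : g = ‖v‖⁻¹ • v := by
  have hvpos : 0 < ‖v‖ := norm_pos_iff.2 hv
  have hg1 : ‖g‖ = 1 := by
    have := real_inner_le_norm g v
    nlinarith
  have heq : ‖v‖ • g = ‖g‖ • v := inner_eq_norm_mul_iff_real.1 (by rw [hgv, hg1, one_mul])
  rw [hg1, one_smul] at heq
  exact (eq_inv_smul_iff₀ hvpos.ne').2 heq

theorem norm_gradient_le_of_lipschitzWith {F : Type*} [NormedAddCommGroup F]
    [InnerProductSpace ℝ F] [CompleteSpace F] {f : F → ℝ} {K : NNReal}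
    (hf : LipschitzWith K f) (x : F) :
    ‖gradient f x‖ ≤ K := by
  rw [← (toDual ℝ F).norm_map, toDual_gradient]
  exact norm_fderiv_le_of_lipschitz ℝ hf

theorem stmt_4_general {n : ℕ} (S : Set (EuclideanSpace ℝ (Fin n)))
    (q p' : EuclideanSpace ℝ (Fin n)) (hq : q ∉ S) (hp' : p' ∈ S)
    (hnear : ‖q - p'‖ = Metric.infDist q S)
    (hdiff : DifferentiableAt ℝ (fun x => Metric.infDist x S) q) :
    gradient (fun x => Metric.infDist x S) q = ‖q - p'‖⁻¹ • (q - p') := by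
  have hv : q - p' ≠ 0 := sub_ne_zero.2 fun h => hq (h ▸ hp')
  refine eq_inv_norm_smul_of_norm_le_one_of_inner_eq_norm hv ?_ ?_
  · simpa using norm_gradient_le_of_lipschitzWith (lipschitz_infDist_pt S) q
  · rw [← toDual_apply_apply, toDual_gradient]
    refine hdiff.hasFDerivAt.apply_eq_of_eventuallyEq_left ?_
    filter_upwards [Icc_mem_nhdsLE (by norm_num : (-1 : ℝ) < 0)] with t ht
    exact infDist_add_smul_sub_of_norm_sub_eq_infDist hp' hnear ht

/-- If the unsigned distance function to a nonempty closed set `S` is differentiable at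
`q ∉ S` with nearest point `p' ∈ S`, then its gradient at `q` is the unit vector from `p'`
to `q`. -/
theorem stmt_4 {n : ℕ} (S : Set (EuclideanSpace ℝ (Fin n))) (hS : S.Nonempty)
    (hSc : IsClosed S) (q p' : EuclideanSpace ℝ (Fin n)) (hq : q ∉ S) (hp' : p' ∈ S)
    (hnear : ‖q - p'‖ = Metric.infDist q S)
    (hdiff : DifferentiableAt ℝ (fun x => Metric.infDist x S) q) :
    gradient (fun x => Metric.infDist x S) q = ‖q - p'‖⁻¹ • (q - p') :=
  stmt_4_general S q p' hq hp' hnear hdiff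
end

section
/- Suppose f : ℝⁿ → ℝ satisfies the Eikonal equation ‖∇f(x)‖ = 1 everywhere (with f differentiable everywhere) and is 1-Lipschitz. Let q₁, q₂ be two distinct points both having the same unique nearest point p' on the zero level set Z = f⁻¹({0}), with f(q₁) < 0 and f(q₂) < 0, |f(x)| = infDist x Z for all x, and q₁, q₂, p' collinear with q₂ strictly between p' and q₁. Then ∇f(q₁) = ∇f(q₂). -/
/-!
Since `f` is 1-Lipschitz and drops by exactly `‖q₁ - p'‖` from `p'` to `q₁`, it drops at unit
speed along the whole segment `[p', q₁]`, which contains `q₂`. So at every point of the segment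
the derivative of `f` in the unit direction `u = (q₁ - p') / ‖q₁ - p'‖` is `-1`; as the gradient
is a unit vector, equality in Cauchy–Schwarz forces `∇f = -u` there.
-/

open AffineMap Set

theorem LipschitzWith.sub_eq_dist_of_mem_segment {E : Type*} [SeminormedAddCommGroup E]
    [NormedSpace ℝ E] {f : E → ℝ} (hf : LipschitzWith 1 f) {x y z : E}
    (hxy : f x - f y = dist x y) (hz : z ∈ segment ℝ x y) : f x - f z = dist x z := by
  have hxz : f x - f z ≤ dist x z := by
    simpa using (le_abs_self _).trans (hf.dist_le_mul x z)
  have hzy : f z - f y ≤ dist z y := by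
    simpa using (le_abs_self _).trans (hf.dist_le_mul z y)
  linarith [dist_add_dist_of_mem_segment hz]

theorem HasFDerivAt.apply_sub_eq_neg_dist_of_mem_segment {E : Type*} [NormedAddCommGroup E]
    [NormedSpace ℝ E] {f : E → ℝ} {f' : E →L[ℝ] ℝ} {x y z : E} (hf : HasFDerivAt f f' z)
    (hz : z ∈ segment ℝ x y) (hseg : ∀ w ∈ segment ℝ x y, f x - f w = dist x w) :
    f' (y - x) = -dist x y := by
  rw [segment_eq_image_lineMap] at hz
  obtain ⟨θ, hθ, rfl⟩ := hz
  have hcomp : HasDerivWithinAt (fun s => f (lineMap x y s)) (f' (y - x)) (Icc 0 1) θ :=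
    (hf.comp_hasDerivAt θ hasDerivAt_lineMap).hasDerivWithinAt
  have hlin : HasDerivWithinAt (fun s : ℝ => f x - s * dist x y) (-dist x y) (Icc 0 1) θ := by
    simpa using ((hasDerivAt_id θ).mul_const (dist x y)).const_sub (f x) |>.hasDerivWithinAt
  have heq : EqOn (fun s => f (lineMap x y s)) (fun s => f x - s * dist x y) (Icc 0 1) := by
    intro s hs
    have hdrop := hseg _ (segment_eq_image_lineMap ℝ x y ▸ mem_image_of_mem _ hs)
    rw [dist_left_lineMap, Real.norm_of_nonneg hs.1] at hdrop
    show f (lineMap x y s) = f x - s * dist x y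
    linarith
  exact (uniqueDiffOn_Icc zero_lt_one θ hθ).eq_deriv _ hcomp (hlin.congr_of_mem heq hθ)

theorem gradient_eq_of_mem_segment {E : Type*} [NormedAddCommGroup E] [InnerProductSpace ℝ E]
    [CompleteSpace E] {f : E → ℝ} (hf : LipschitzWith 1 f) {x y z : E} (hxy : x ≠ y)
    (h : f x - f y = dist x y) (hz : z ∈ segment ℝ x y) (hdiff : DifferentiableAt ℝ f z)
    (hunit : ‖gradient f z‖ = 1) : gradient f z = -(‖y - x‖⁻¹ • (y - x)) := by
  have hyx : y - x ≠ 0 := sub_ne_zero.2 hxy.symm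
  have hderiv : fderiv ℝ f z (y - x) = -‖y - x‖ := by
    rw [hdiff.hasFDerivAt.apply_sub_eq_neg_dist_of_mem_segment hz
      fun w hw => hf.sub_eq_dist_of_mem_segment h hw, dist_comm, dist_eq_norm]
  refine (inner_eq_neg_one_iff_of_norm_eq_one (𝕜 := ℝ) hunit (norm_smul_inv_norm hyx)).1 ?_
  rw [inner_gradient_left, map_smul, hderiv, RCLike.ofReal_real_eq_id, id_eq, smul_neg,
    smul_eq_mul, inv_mul_cancel₀ (norm_ne_zero_iff.2 hyx)]

theorem stmt_9_general {n : ℕ} (f : EuclideanSpace ℝ (Fin n) → ℝ)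
    (hdiff : Differentiable ℝ f)
    (heik : ∀ x, ‖gradient f x‖ = 1)
    (hlip : LipschitzWith 1 f)
    (Z : Set (EuclideanSpace ℝ (Fin n))) (hZ : Z = f ⁻¹' {0})
    (hsd : ∀ x, |f x| = Metric.infDist x Z)
    (q₁ q₂ p' : EuclideanSpace ℝ (Fin n)) (hp' : p' ∈ Z)
    (hf1 : f q₁ < 0)
    (hnear1 : ‖q₁ - p'‖ = Metric.infDist q₁ Z)
    (t : ℝ) (ht0 : 0 < t) (ht1 : t < 1) (hcol : q₂ = p' + t • (q₁ - p')) :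
    gradient f q₁ = gradient f q₂ := by
  have hfp' : f p' = 0 := by rw [hZ] at hp'; exact hp'
  have hdrop : f p' - f q₁ = dist p' q₁ := by
    rw [dist_comm, dist_eq_norm, hnear1, ← hsd, abs_of_neg hf1, hfp', zero_sub]
  have hne : p' ≠ q₁ := by rintro rfl; linarith
  have hq₂ : q₂ ∈ segment ℝ p' q₁ := by
    rw [segment_eq_image']
    exact ⟨t, ⟨ht0.le, ht1.le⟩, hcol.symm⟩
  rw [gradient_eq_of_mem_segment hlip hne hdrop (right_mem_segment ℝ p' q₁) (hdiff q₁)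
    (heik q₁), gradient_eq_of_mem_segment hlip hne hdrop hq₂ (hdiff q₂) (heik q₂)]

/-- For a signed distance function `f` (differentiable, unit gradient, 1-Lipschitz, with
`|f|` the distance to `Z = f⁻¹({0})`), two distinct points `q₁ ≠ q₂` on the negative side
sharing the same unique nearest point `p' ∈ Z`, with `q₂` strictly between `p'` and `q₁`,
have equal gradients. -/
theorem stmt_9 {n : ℕ} (f : EuclideanSpace ℝ (Fin n) → ℝ)
    (hdiff : Differentiable ℝ f)
    (heik : ∀ x, ‖gradient f x‖ = 1)
    (hlip : LipschitzWith 1 f)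
    (Z : Set (EuclideanSpace ℝ (Fin n))) (hZ : Z = f ⁻¹' {0})
    (hsd : ∀ x, |f x| = Metric.infDist x Z)
    (q₁ q₂ p' : EuclideanSpace ℝ (Fin n)) (hq12 : q₁ ≠ q₂) (hp' : p' ∈ Z)
    (hf1 : f q₁ < 0) (hf2 : f q₂ < 0)
    (hnear1 : ‖q₁ - p'‖ = Metric.infDist q₁ Z)
    (hnear2 : ‖q₂ - p'‖ = Metric.infDist q₂ Z)
    (huniq1 : ∀ p ∈ Z, ‖q₁ - p‖ = Metric.infDist q₁ Z → p = p')
    (huniq2 : ∀ p ∈ Z, ‖q₂ - p‖ = Metric.infDist q₂ Z → p = p')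
    (t : ℝ) (ht0 : 0 < t) (ht1 : t < 1) (hcol : q₂ = p' + t • (q₁ - p')) :
    gradient f q₁ = gradient f q₂ :=
  stmt_9_general f hdiff heik hlip Z hZ hsd q₁ q₂ p' hp' hf1 hnear1 t ht0 ht1 hcol
end

section
/- Let f : ℝⁿ → ℝ be a signed distance function to a closed set with boundary Z = f⁻¹({0}): f differentiable everywhere, ‖∇f(x)‖ = 1 for all x, and |f(x)| = infDist x Z. For q with f(q) > 0 (outside) and nearest point p' ∈ Z, the gradient satisfies ∇f(q) = (q - p')/‖q - p'‖; for q with f(q) < 0 (inside), ∇f(q) = -(q - p')/‖q - p'‖. In both cases ∇f(q) and ∇f(p') (if the latter is taken as the limit direction, i.e., assuming ∇f(p') = ±(q - p')/‖q - p'‖ by continuity of ∇f along the segment) are parallel. -/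
/-!
Since `|f x| = infDist x Z ≤ ‖x - p'‖` for every `x`, with equality at `x = q`, the differentiable
function `x ↦ ‖x - p'‖² - f x²` attains its minimum `0` at `q`. Its gradient vanishes there,
which gives `f q • ∇f(q) = q - p'` with `f q = ±‖q - p'‖`.
-/

open Filter Topology

section

variable {E : Type*} [NormedAddCommGroup E] [InnerProductSpace ℝ E] [CompleteSpace E]
  {f : E → ℝ} {g p x : E}

theorem HasGradientAt.sq (hf : HasGradientAt f g x) :
    HasGradientAt (fun y => f y ^ 2) ((2 * f x) • g) x := by
  rw [hasGradientAt_iff_hasFDerivAt, map_smul]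
  simpa using hf.hasFDerivAt.pow 2

theorem hasGradientAt_norm_sub_sq (p x : E) :
    HasGradientAt (fun y => ‖y - p‖ ^ 2) ((2 : ℝ) • (x - p)) x := by
  rw [hasGradientAt_iff_hasFDerivAt]
  refine ((hasFDerivAt_id x).sub_const p).norm_sq.congr_fderiv ?_
  ext v
  simp

theorem HasGradientAt.smul_eq_sub_of_abs_le_norm_sub (hf : HasGradientAt f g x)
    (hle : ∀ᶠ y in 𝓝 x, |f y| ≤ ‖y - p‖) (heq : |f x| = ‖x - p‖) :
    f x • g = x - p := by
  have hmin : IsLocalMin (fun y => ‖y - p‖ ^ 2 - f y ^ 2) x := by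
    filter_upwards [hle] with y hy
    rw [← heq, sq_abs, sub_self, sub_nonneg, ← sq_abs (f y)]
    exact pow_le_pow_left₀ (abs_nonneg _) hy 2
  have h0 := hmin.hasFDerivAt_eq_zero
    ((hasGradientAt_norm_sub_sq p x).hasFDerivAt.sub hf.sq.hasFDerivAt)
  rw [← map_sub, LinearIsometryEquiv.map_eq_zero_iff, sub_eq_zero, mul_smul] at h0
  exact (smul_right_injective E two_ne_zero h0).symm

theorem smul_gradient_eq_sub_of_abs_eq_infDist {Z : Set E}
    (hf : DifferentiableAt ℝ f x) (hsd : ∀ y, |f y| = Metric.infDist y Z)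
    (hp : p ∈ Z) (hnear : ‖x - p‖ = Metric.infDist x Z) :
    f x • gradient f x = x - p := by
  refine hf.hasGradientAt.smul_eq_sub_of_abs_le_norm_sub (.of_forall fun y => ?_)
    (by rw [hsd, hnear])
  rw [hsd, ← dist_eq_norm]
  exact Metric.infDist_le_dist_of_mem hp

end

theorem stmt_14_general {n : ℕ} (f : EuclideanSpace ℝ (Fin n) → ℝ)
    (hdiff : Differentiable ℝ f)
    (Z : Set (EuclideanSpace ℝ (Fin n)))
    (hsd : ∀ x, |f x| = Metric.infDist x Z)
    (q p' : EuclideanSpace ℝ (Fin n)) (hp' : p' ∈ Z)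
    (hnear : ‖q - p'‖ = Metric.infDist q Z) :
    (0 < f q → gradient f q = ‖q - p'‖⁻¹ • (q - p')) ∧
    (f q < 0 → gradient f q = -(‖q - p'‖⁻¹ • (q - p'))) ∧
    ((gradient f p' = ‖q - p'‖⁻¹ • (q - p') ∨
        gradient f p' = -(‖q - p'‖⁻¹ • (q - p'))) →
      ∃ c : ℝ, gradient f p' = c • gradient f q) := by
  have key := smul_gradient_eq_sub_of_abs_eq_infDist (hdiff q) hsd hp' hnear
  have habs : |f q| = ‖q - p'‖ := by rw [hsd, hnear]
  have hgrad : f q ≠ 0 → gradient f q = (f q)⁻¹ • (q - p') := fun h => by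
    rw [← key, smul_smul, inv_mul_cancel₀ h, one_smul]
  refine ⟨fun hpos => ?_, fun hneg => ?_, ?_⟩
  · rw [hgrad hpos.ne', ← habs, abs_of_pos hpos]
  · rw [hgrad hneg.ne, ← habs, abs_of_neg hneg, inv_neg, neg_smul, neg_neg]
  · rintro (h | h)
    · exact ⟨‖q - p'‖⁻¹ * f q, by rw [h, ← key, smul_smul]⟩
    · exact ⟨-(‖q - p'‖⁻¹ * f q), by rw [h, ← key, smul_smul, neg_smul]⟩

/-- For a signed distance function `f` to `Z = f⁻¹({0})` (differentiable, unit gradient,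
`|f|` equal to the distance to `Z`) and `q ∉ Z` with nearest point `p' ∈ Z`:
if `f q > 0` then `∇f(q) = (q - p')/‖q - p'‖`; if `f q < 0` then
`∇f(q) = -(q - p')/‖q - p'‖`; and if `∇f(p') = ±(q - p')/‖q - p'‖`, then `∇f(p')` is
parallel to `∇f(q)`. -/
theorem stmt_14 {n : ℕ} (f : EuclideanSpace ℝ (Fin n) → ℝ)
    (hdiff : Differentiable ℝ f)
    (heik : ∀ x, ‖gradient f x‖ = 1)
    (Z : Set (EuclideanSpace ℝ (Fin n))) (hZ : Z = f ⁻¹' {0})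
    (hsd : ∀ x, |f x| = Metric.infDist x Z)
    (q p' : EuclideanSpace ℝ (Fin n)) (hq : q ∉ Z) (hp' : p' ∈ Z)
    (hnear : ‖q - p'‖ = Metric.infDist q Z) :
    (0 < f q → gradient f q = ‖q - p'‖⁻¹ • (q - p')) ∧
    (f q < 0 → gradient f q = -(‖q - p'‖⁻¹ • (q - p'))) ∧
    ((gradient f p' = ‖q - p'‖⁻¹ • (q - p') ∨
        gradient f p' = -(‖q - p'‖⁻¹ • (q - p'))) →
      ∃ c : ℝ, gradient f p' = c • gradient f q) :=
  stmt_14_general f hdiff Z hsd q p' hp' hnear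
end

section
/- Let d be the distance function to a nonempty closed set Z ⊆ ℝⁿ. If d is differentiable at q ∉ Z, then q has a unique nearest point in Z. -/
/-!
If `p ∈ Z` is a nearest point to `q`, then `x ↦ d(x)² - ‖x - p‖²` is `≤ 0` everywhere and
vanishes at `q`, so its derivative at `q` is zero: `d(q) · Dd(q) = ⟪q - p, ·⟫`. The left side
does not depend on `p`, and `v ↦ ⟪v, ·⟫` is injective, so the nearest point is unique.
-/
open Metric

variable {E : Type*} [NormedAddCommGroup E] [InnerProductSpace ℝ E]

theorem HasFDerivAt.infDist_smul_eq_innerSL {Z : Set E} {q p : E} {f' : E →L[ℝ] ℝ}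
    (hf : HasFDerivAt (infDist · Z) f' q) (hp : p ∈ Z) (hpq : infDist q Z = dist q p) :
    infDist q Z • f' = innerSL ℝ (q - p) := by
  have hmax : IsMaxOn (fun x => infDist x Z ^ 2 - ‖x - p‖ ^ 2) Set.univ q := fun x _ => by
    have hle := infDist_le_dist_of_mem (x := x) hp
    simp only [Set.mem_ofPred_eq, hpq, ← dist_eq_norm, sub_self]
    nlinarith [infDist_nonneg (x := x) (s := Z)]
  have hderiv := (hf.pow 2).sub (hasFDerivAt_sub_const p).norm_sq
  have hzero := (hmax.isLocalMax Filter.univ_mem).hasFDerivAt_eq_zero hderiv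
  ext v
  have hv := congrArg (· v) hzero
  simp only [sub_apply, smul_apply, ContinuousLinearMap.comp_apply,
    ContinuousLinearMap.id_apply, innerSL_apply_apply, zero_apply, smul_eq_mul, nsmul_eq_mul,
    Nat.cast_ofNat, Nat.add_one_sub_one, pow_one] at hv ⊢
  linarith

theorem eq_of_infDist_eq_dist_of_differentiableAt {Z : Set E} {q p p' : E}
    (hdiff : DifferentiableAt ℝ (infDist · Z) q) (hp : p ∈ Z) (hpq : infDist q Z = dist q p)
    (hp' : p' ∈ Z) (hp'q : infDist q Z = dist q p') : p = p' := by
  have h := (hdiff.hasFDerivAt.infDist_smul_eq_innerSL hp hpq).symm.trans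
    (hdiff.hasFDerivAt.infDist_smul_eq_innerSL hp' hp'q)
  simpa using innerSL_inj.mp h

theorem stmt_15_general {n : ℕ} (Z : Set (EuclideanSpace ℝ (Fin n))) (hZ : Z.Nonempty)
    (hZc : IsClosed Z) (q : EuclideanSpace ℝ (Fin n))
    (hdiff : DifferentiableAt ℝ (fun x => Metric.infDist x Z) q) :
    ∃! p' : EuclideanSpace ℝ (Fin n), p' ∈ Z ∧ ‖q - p'‖ = Metric.infDist q Z := by
  simp only [← dist_eq_norm, eq_comm (a := dist q _)]
  obtain ⟨p, hpZ, hpq⟩ := hZc.exists_infDist_eq_dist hZ q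
  exact ⟨p, ⟨hpZ, hpq⟩, fun p' ⟨hp'Z, hp'q⟩ =>
    eq_of_infDist_eq_dist_of_differentiableAt hdiff hp'Z hp'q hpZ hpq⟩

/-- If the distance function to a nonempty closed set `Z ⊆ ℝⁿ` is differentiable at
`q ∉ Z`, then `q` has a unique nearest point in `Z`. -/
theorem stmt_15 {n : ℕ} (Z : Set (EuclideanSpace ℝ (Fin n))) (hZ : Z.Nonempty)
    (hZc : IsClosed Z) (q : EuclideanSpace ℝ (Fin n)) (hq : q ∉ Z)
    (hdiff : DifferentiableAt ℝ (fun x => Metric.infDist x Z) q) :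
    ∃! p' : EuclideanSpace ℝ (Fin n), p' ∈ Z ∧ ‖q - p'‖ = Metric.infDist q Z :=
  stmt_15_general Z hZ hZc q hdiff
end
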